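/- arXiv:1510.03150 — 2 statements merged into one kernel-verified Lean document; each statement's English description precedes it below -/
import Mathlib

section
/- Let C be a symmetric monoidal closed category, let i : D ⥤ C be a fully faithful functor admitting a left adjoint L : C ⥤ D (so D is a reflective subcategory of C), and let η denote the unit of the adjunction L ⊣ i. Then the essential image of i is an exponential ideal (i.e., for every object Y of C and every object Z of D, the internal hom [Y, i(Z)] lies in the essential image of i) if and only if for all objects Y, Z of C the morphism L(η_Y ⊗ η_Z) : L(Y ⊗ Z) → L(i(L(Y)) ⊗ i(L(Z))) is an isomorphism. -/
/-!
A morphism `f` is inverted by the reflector `L` iff precomposition with `f` is bijective on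
morphisms into objects of `D`. Transporting this along the tensor-hom adjunction, `[A, i Z]`
is local with respect to `f` iff `i Z` is local with respect to `A ◁ f`. Hence the essential
image is an exponential ideal iff `A ◁ -` preserves `L`-inverted maps; it suffices to check this
on the units `η_B`, since an object `E` lies in the essential image as soon as `η_E` is a split
mono. With the braiding, stability under `A ◁ -` is the same as stability under `⊗`.
-/

open CategoryTheory MonoidalCategory MonoidalClosed

namespace CategoryTheory

variable {C D : Type*} [Category C] [Category D]

namespace Adjunction

lemma bijective_precomp_map_iff {F : C ⥤ D} {G : D ⥤ C} (adj : F ⊣ G) {X Y : C}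
    (f : X ⟶ Y) (Z : D) :
    Function.Bijective (fun g : F.obj Y ⟶ Z => F.map f ≫ g) ↔
      Function.Bijective (fun g : Y ⟶ G.obj Z => f ≫ g) := by
  have hconj : (fun g : F.obj Y ⟶ Z => F.map f ≫ g) =
      (adj.homEquiv X Z).symm ∘ (fun g : Y ⟶ G.obj Z => f ≫ g) ∘ adj.homEquiv Y Z := by
    funext g
    simp [Adjunction.homEquiv_naturality_left_symm]
  rw [hconj, Equiv.comp_bijective, Equiv.bijective_comp]

variable {i : D ⥤ C} {L : C ⥤ D} (adj : L ⊣ i)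
include adj

lemma isIso_map_iff_bijective_precomp {X Y : C} (f : X ⟶ Y) :
    IsIso (L.map f) ↔ ∀ W : D, Function.Bijective (fun g : Y ⟶ i.obj W => f ≫ g) := by
  rw [isIso_iff_coyoneda_map_bijective]
  exact forall_congr' (adj.bijective_precomp_map_iff f)

lemma bijective_precomp_of_mem_essImage {X Y : C} (f : X ⟶ Y) [IsIso (L.map f)] {E : C}
    (hE : i.essImage E) : Function.Bijective (fun g : Y ⟶ E => f ≫ g) := by
  obtain ⟨W, ⟨e⟩⟩ := hE
  have hlocal : ((MorphismProperty.isomorphisms D).inverseImage L).isLocal (i.obj W) :=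
    fun _ _ f' (hf' : IsIso (L.map f')) => (adj.isIso_map_iff_bijective_precomp f').1 hf' W
  exact ObjectProperty.prop_of_iso _ e hlocal f (inferInstance : IsIso (L.map f))

lemma mem_essImage_of_isSplitMono_unit_app [i.Full] [i.Faithful] (E : C)
    [IsSplitMono (adj.unit.app E)] : i.essImage E := by
  have hsection : retraction (adj.unit.app E) ≫ adj.unit.app E = 𝟙 _ :=
    (adj.bijective_precomp_of_mem_essImage (adj.unit.app E) (i.obj_mem_essImage _)).1 (by simp)
  exact adj.isIso_unit_app_iff_mem_essImage.1 ⟨_, IsSplitMono.id _, hsection⟩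

end Adjunction

section Monoidal

variable [MonoidalCategory C]

lemma Functor.isIso_map_tensorHom_of_isIso_map_whiskerLeft [BraidedCategory C] (L : C ⥤ D)
    (hwhisker : ∀ (A : C) {X Y : C} (f : X ⟶ Y), IsIso (L.map f) → IsIso (L.map (A ◁ f)))
    {X₁ Y₁ X₂ Y₂ : C} (f : X₁ ⟶ Y₁) (g : X₂ ⟶ Y₂) [IsIso (L.map f)] [IsIso (L.map g)] :
    IsIso (L.map (f ⊗ₘ g)) := by
  have hright : IsIso (L.map (f ▷ X₂)) := by
    have := hwhisker X₂ f inferInstance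
    have hbraid : f ▷ X₂ = (β_ X₂ X₁).inv ≫ X₂ ◁ f ≫ (β_ X₂ Y₁).hom := by
      rw [← Category.assoc, ← Iso.comp_inv_eq, BraidedCategory.braiding_inv_naturality_left]
    rw [hbraid, L.map_comp, L.map_comp]
    infer_instance
  have := hwhisker Y₁ g inferInstance
  rw [MonoidalCategory.tensorHom_def, L.map_comp]
  infer_instance

variable {i : D ⥤ C} {L : C ⥤ D} (adj : L ⊣ i)
include adj

lemma isIso_map_whiskerLeft_unit_of_isIso_map_tensorHom_unit [i.Full] [i.Faithful]
    (htensor : ∀ Y Z : C, IsIso (L.map (adj.unit.app Y ⊗ₘ adj.unit.app Z))) (A B : C) :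
    IsIso (L.map (A ◁ adj.unit.app B)) := by
  -- `η_{i L B}` is an isomorphism, so `η_A ▷ i L B` is `L`-inverted
  have hright : IsIso (L.map (adj.unit.app A ▷ i.obj (L.obj B))) := by
    have h := htensor A (i.obj (L.obj B))
    rw [MonoidalCategory.tensorHom_def, L.map_comp] at h
    simp only [Functor.comp_obj, Functor.id_obj] at h
    exact IsIso.of_isIso_comp_right _
      (L.map (i.obj (L.obj A) ◁ adj.unit.app (i.obj (L.obj B))))
  have h := htensor A B
  rw [MonoidalCategory.tensorHom_def', L.map_comp] at h
  simp only [Functor.comp_obj, Functor.id_obj] at h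
  exact IsIso.of_isIso_comp_right _ (L.map (adj.unit.app A ▷ i.obj (L.obj B)))

variable [MonoidalClosed C]

lemma isIso_map_whiskerLeft_of_mem_essImage_ihom
    (hexp : ∀ (A : C) (Z : D), i.essImage ((ihom A).obj (i.obj Z))) (A : C) {X Y : C}
    (f : X ⟶ Y) [IsIso (L.map f)] : IsIso (L.map (A ◁ f)) := by
  rw [adj.isIso_map_iff_bijective_precomp]
  intro W
  exact ((ihom.adjunction A).bijective_precomp_map_iff f (i.obj W)).2
    (adj.bijective_precomp_of_mem_essImage f (hexp A W))

lemma mem_essImage_ihom_of_isIso_map_whiskerLeft_unit [i.Full] [i.Faithful]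
    (hunit : ∀ A B : C, IsIso (L.map (A ◁ adj.unit.app B))) (A : C) (Z : D) :
    i.essImage ((ihom A).obj (i.obj Z)) := by
  set E := (ihom A).obj (i.obj Z)
  have hbij : Function.Bijective (fun g : i.obj (L.obj E) ⟶ E => adj.unit.app E ≫ g) :=
    ((ihom.adjunction A).bijective_precomp_map_iff (adj.unit.app E) (i.obj Z)).1
      ((adj.isIso_map_iff_bijective_precomp _).1 (hunit A E) Z)
  obtain ⟨r, hr⟩ := hbij.2 (𝟙 E)
  have : IsSplitMono (adj.unit.app E) := ⟨⟨⟨r, hr⟩⟩⟩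
  exact adj.mem_essImage_of_isSplitMono_unit_app E

end Monoidal

end CategoryTheory

/-- **Exponential ideals and monoidal products.**
Let `C` be a symmetric monoidal closed category, `i : D ⥤ C` a fully faithful functor
with left adjoint `L : C ⥤ D` (so `D` is reflective in `C`), with unit `η`.  The essential
image of `i` is an exponential ideal (closed under internal homs `[Y, i Z]` for all `Y : C`,
`Z : D`) if and only if `L (η_Y ⊗ η_Z) : L (Y ⊗ Z) → L (i (L Y) ⊗ i (L Z))` is an
isomorphism for all `Y Z : C`. -/
theorem exponential_ideal_iff_unit_tensor_unit_localizes
    {C D : Type*} [Category C] [Category D]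
    [MonoidalCategory C] [SymmetricCategory C] [MonoidalClosed C]
    (i : D ⥤ C) [i.Full] [i.Faithful] (L : C ⥤ D) (adj : L ⊣ i) :
    (∀ (Y : C) (Z : D), i.essImage ((ihom Y).obj (i.obj Z))) ↔
      ∀ Y Z : C,
        IsIso (L.map (MonoidalCategory.tensorHom (adj.unit.app Y) (adj.unit.app Z))) := by
  constructor
  · intro hexp Y Z
    exact L.isIso_map_tensorHom_of_isIso_map_whiskerLeft
      (fun A _ _ f _ => isIso_map_whiskerLeft_of_mem_essImage_ihom adj hexp A f) _ _
  · intro htensor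
    exact mem_essImage_ihom_of_isIso_map_whiskerLeft_unit adj
      (isIso_map_whiskerLeft_unit_of_isIso_map_tensorHom_unit adj htensor)
end

section
/- For every n ≥ 0, the family H_2 satisfies the boundary conditions of a simplicial homotopy from η to the diagonal-after-first-projection map: H_2^{0,n} ∘ (δ^0×δ^0) = η^n and H_2^{n,n} ∘ (δ^{n+1}×δ^{n+1}) = ((j,k) ↦ (j,j)), as maps [n]×[n] → [n]×[n]. -/
/-- The map `η^n : [n]×[n] → [n]×[n]` given by `η^n(i,j) = (i,i)` if `i ≥ j` and
`η^n(i,j) = (i,j)` if `i < j`. -/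
def eta (n : ℕ) (p : Fin (n + 1) × Fin (n + 1)) : Fin (n + 1) × Fin (n + 1) :=
  if p.2 ≤ p.1 then (p.1, p.1) else p

/-- The map `H_2^{i,n} : [n+1]×[n+1] → [n]×[n]` given by `(j,k) ↦ (j,j)` if `j ≤ i`;
`(j−1,j−1)` if `j > i` and `j ≥ k`; and `(j−1,k−1)` if `k > j > i`. -/
def H2 (n : ℕ) (i : Fin (n + 1)) (p : Fin (n + 2) × Fin (n + 2)) :
    Fin (n + 1) × Fin (n + 1) :=
  if h1 : (p.1 : ℕ) ≤ (i : ℕ) then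
    (⟨(p.1 : ℕ), lt_of_le_of_lt h1 i.isLt⟩, ⟨(p.1 : ℕ), lt_of_le_of_lt h1 i.isLt⟩)
  else
    if h2 : (p.2 : ℕ) ≤ (p.1 : ℕ) then
      (⟨(p.1 : ℕ) - 1, by have := p.1.isLt; omega⟩,
        ⟨(p.1 : ℕ) - 1, by have := p.1.isLt; omega⟩)
    else
      (⟨(p.1 : ℕ) - 1, by have := p.1.isLt; omega⟩,
        ⟨(p.2 : ℕ) - 1, by have := p.2.isLt; omega⟩)

/-- **Boundary conditions of the simplicial homotopy `H_2` (from `η` to `αρ`).**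
Here `δ^i = Fin.succAbove i`.  One has `H_2^{0,n} ∘ (δ^0 × δ^0) = η^n` and
`H_2^{n,n} ∘ (δ^{n+1} × δ^{n+1}) = ((j,k) ↦ (j,j))`, as maps `[n]×[n] → [n]×[n]`. -/
theorem H2_boundary_conditions (n : ℕ) :
    H2 n 0 ∘ Prod.map (Fin.succAbove (0 : Fin (n + 2))) (Fin.succAbove (0 : Fin (n + 2)))
        = eta n ∧
      H2 n (Fin.last n) ∘
          Prod.map (Fin.succAbove (Fin.last (n + 1))) (Fin.succAbove (Fin.last (n + 1)))
        = fun p : Fin (n + 1) × Fin (n + 1) => (p.1, p.1) := by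
  constructor <;> funext p <;> obtain ⟨j, k⟩ := p
  · have hj : ((Fin.succAbove (0 : Fin (n + 2)) j : Fin (n+2)) : ℕ) = (j : ℕ) + 1 := by
      simp [Fin.succAbove, Fin.lt_def]
    have hk : ((Fin.succAbove (0 : Fin (n + 2)) k : Fin (n+2)) : ℕ) = (k : ℕ) + 1 := by
      simp [Fin.succAbove, Fin.lt_def]
    simp only [Function.comp_apply, Prod.map_apply, H2, eta, hj, hk, Fin.val_zero, Fin.le_def]
    split_ifs with h1 h2 h3 h3 <;>
      refine Prod.ext (Fin.ext ?_) (Fin.ext ?_) <;> simp <;> omega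
  · have hj : ((Fin.succAbove (Fin.last (n + 1)) j : Fin (n+2)) : ℕ) = (j : ℕ) := by
      simp [Fin.succAbove, Fin.castSucc_lt_last, Fin.lt_def, Fin.last, j.isLt]
    have hk : ((Fin.succAbove (Fin.last (n + 1)) k : Fin (n+2)) : ℕ) = (k : ℕ) := by
      simp [Fin.succAbove, Fin.castSucc_lt_last, Fin.lt_def, Fin.last, k.isLt]
    simp only [Function.comp_apply, Prod.map_apply, H2, hj, hk, Fin.val_last]
    have := j.isLt
    split_ifs <;>
      refine Prod.ext (Fin.ext ?_) (Fin.ext ?_) <;> simp <;> omega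
end
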